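/- For σ ∈ ℝ and k = (k₁,…,k_n) ∈ (ℤ_{≥2})ⁿ, SLs(k; σ) = (-1)ⁿ Σ_{j ≤ k - 2ₙ} (∏_u C(k_u-2, j_u)) (-σ)^{|k - 2ₙ - j|} Ls_{j+2ₙ}^{j}(σ), where 2ₙ = (2,…,2), the sum is over j ∈ (ℤ_{≥0})ⁿ with j_u ≤ k_u - 2 for all u, and Ls_{j+2ₙ}^{j}(σ) is the iterated log-sine integral with index (j₁+2,…,j_n+2) and exponent vector (j₁,…,j_n). -/

import Mathlib

/-!
Expanding `(θ_u - σ)^(k_u - 2)` binomially in every variable turns the integrand of `SLs` into a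
finite sum of integrands of `Ls_{j+2}^{j}`-type, and each nested integral is linear in its
integrand. The only analytic input is that `A = log |2 sin (θ/2)|` is integrable on every
interval, as the logarithm of an analytic function, so every partial nested integral is continuous
and linearity applies at each level. The sign `(-1)ⁿ` in the definition of `Ls` cancels against
the one in the statement.
-/

open MeasureTheory Real

noncomputable def A (θ : ℝ) : ℝ := Real.log |2 * Real.sin (θ / 2)|

/-- Nested iterated integral; the list is in reverse order (outermost variable first). -/
noncomputable def LsNest (ρ : ℝ) : List (ℕ × ℕ) → ℝ → ℝ
  | [] => fun _ => 1
  | p :: rest => fun σ => ∫ θ in ρ..σ, θ ^ p.2 * A θ ^ (p.1 - 1 - p.2) * LsNest ρ rest θ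

/-- The iterated log-sine integral `Ls_k^l(ρ; σ)`. -/
noncomputable def Ls {n : ℕ} (k l : Fin n → ℕ) (ρ σ : ℝ) : ℝ :=
  (-1 : ℝ) ^ n * LsNest ρ ((List.ofFn fun u => (k u, l u)).reverse) σ

/-- Nested integral for shifted log-sine integrals; the list is in reverse order
(outermost variable first). -/
noncomputable def SLsNest (σ : ℝ) : List ℕ → ℝ → ℝ
  | [] => fun _ => 1
  | p :: rest => fun t => ∫ θ in (0:ℝ)..t, (θ - σ) ^ (p - 2) * A θ * SLsNest σ rest θ

noncomputable def SLs {n : ℕ} (k : Fin n → ℕ) (σ : ℝ) : ℝ :=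
  SLsNest σ ((List.ofFn k).reverse) σ

theorem intervalIntegrable_A (a b : ℝ) : IntervalIntegrable A volume a b := by
  have hsin : AnalyticOnNhd ℝ (fun θ : ℝ => 2 * sin (θ / 2)) (Set.uIcc a b) := fun θ _ => by
    fun_prop
  have hA : A = log ∘ fun θ => 2 * sin (θ / 2) := funext fun θ => log_abs _
  exact hA ▸ hsin.meromorphicOn.intervalIntegrable_log

theorem intervalIntegrable_mul_A_mul {f g : ℝ → ℝ} (hf : Continuous f) (hg : Continuous g)
    (a b : ℝ) : IntervalIntegrable (fun θ => f θ * A θ * g θ) volume a b :=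
  ((intervalIntegrable_A a b).continuousOn_mul hf.continuousOn).mul_continuousOn hg.continuousOn

theorem List.reverse_ofFn_succ {α : Type*} {n : ℕ} (f : Fin (n + 1) → α) :
    (List.ofFn f).reverse = f (Fin.last n) :: (List.ofFn fun i => f i.castSucc).reverse := by
  rw [List.ofFn_succ', List.concat_eq_append, List.reverse_append, List.reverse_singleton,
    List.singleton_append]

theorem LsNest_cons_add_two (ρ : ℝ) (i : ℕ) (L : List (ℕ × ℕ)) (t : ℝ) :
    LsNest ρ ((i + 2, i) :: L) t = ∫ θ in ρ..t, θ ^ i * A θ * LsNest ρ L θ := by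
  rw [LsNest, show i + 2 - 1 - i = 1 by omega]
  simp only [pow_one]

theorem continuous_LsNest (ρ : ℝ) :
    ∀ L : List (ℕ × ℕ), (∀ p ∈ L, p.1 = p.2 + 2) → Continuous (LsNest ρ L)
  | [], _ => continuous_const
  | (k, i) :: L, hL => by
    obtain rfl : k = i + 2 := hL _ List.mem_cons_self
    have hcont := continuous_LsNest ρ L fun p hp => hL p (List.mem_cons_of_mem _ hp)
    simp only [funext (LsNest_cons_add_two ρ i L)]
    exact intervalIntegral.continuous_primitive
      (intervalIntegrable_mul_A_mul (continuous_pow i) hcont) ρ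

theorem sub_pow_sub_two_eq_sum (x y : ℝ) {k : ℕ} (hk : 2 ≤ k) :
    (x - y) ^ (k - 2) =
      ∑ i : Fin (k - 1), ((k - 2).choose i : ℝ) * (-y) ^ (k - 2 - i) * x ^ (i : ℕ) := by
  rw [Fin.sum_univ_eq_sum_range (fun i => ((k - 2).choose i : ℝ) * (-y) ^ (k - 2 - i) * x ^ i),
    show k - 1 = k - 2 + 1 by omega, sub_eq_add_neg, add_pow]
  exact Finset.sum_congr rfl fun i _ => by ring

theorem Fin.sum_pi_eq_sum_snoc {n : ℕ} {α : Fin (n + 1) → Type*} [∀ i, Fintype (α i)]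
    {M : Type*} [AddCommMonoid M] (f : (∀ i, α i) → M) :
    ∑ j, f j = ∑ p : α (Fin.last n) × ∀ i : Fin n, α i.castSucc, f (Fin.snoc p.2 p.1) :=
  (Fintype.sum_equiv (Fin.snocEquiv α) _ _ fun _ => rfl).symm

theorem SLsNest_ofFn_eq_sum (σ : ℝ) : ∀ {n : ℕ} (k : Fin n → ℕ), (∀ u, 2 ≤ k u) → ∀ t : ℝ,
    SLsNest σ (List.ofFn k).reverse t = ∑ j : (u : Fin n) → Fin (k u - 1),
      (∏ u, ((k u - 2).choose (j u) : ℝ) * (-σ) ^ (k u - 2 - j u)) *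
        LsNest 0 (List.ofFn fun u => ((j u : ℕ) + 2, (j u : ℕ))).reverse t
  | 0, k, _, t => by simp [SLsNest, LsNest]
  | n + 1, k, hk, t => by
    have ih := SLsNest_ofFn_eq_sum σ (fun u => k u.castSucc) (fun u => hk _)
    have hexpand : ∀ θ, (θ - σ) ^ (k (Fin.last n) - 2) * A θ *
        SLsNest σ (List.ofFn fun u => k u.castSucc).reverse θ =
        ∑ p : Fin (k (Fin.last n) - 1) × ((u : Fin n) → Fin (k u.castSucc - 1)),
          (((k (Fin.last n) - 2).choose p.1 : ℝ) * (-σ) ^ (k (Fin.last n) - 2 - p.1) *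
            ∏ u, ((k u.castSucc - 2).choose (p.2 u) : ℝ) * (-σ) ^ (k u.castSucc - 2 - p.2 u)) *
          (θ ^ (p.1 : ℕ) * A θ *
            LsNest 0 (List.ofFn fun u => ((p.2 u : ℕ) + 2, (p.2 u : ℕ))).reverse θ) := by
      intro θ
      rw [ih, sub_pow_sub_two_eq_sum _ _ (hk _), Finset.sum_mul, Finset.sum_mul,
        Fintype.sum_prod_type]
      refine Finset.sum_congr rfl fun i _ => ?_
      rw [Finset.mul_sum]
      exact Finset.sum_congr rfl fun j _ => by ring
    have hint : ∀ p : Fin (k (Fin.last n) - 1) × ((u : Fin n) → Fin (k u.castSucc - 1)),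
        IntervalIntegrable (fun θ => θ ^ (p.1 : ℕ) * A θ *
          LsNest 0 (List.ofFn fun u => ((p.2 u : ℕ) + 2, (p.2 u : ℕ))).reverse θ) volume 0 t :=
      fun p => intervalIntegrable_mul_A_mul (continuous_pow _)
        (continuous_LsNest 0 _ (by simp [List.mem_ofFn])) 0 t
    simp only [List.reverse_ofFn_succ, SLsNest, hexpand]
    rw [intervalIntegral.integral_finsetSum fun p _ => (hint p).const_mul _,
      Fin.sum_pi_eq_sum_snoc]
    refine Finset.sum_congr rfl fun p _ => ?_
    simp only [Fin.snoc_last, Fin.snoc_castSucc, Fin.prod_univ_castSucc, LsNest_cons_add_two,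
      intervalIntegral.integral_const_mul]
    ring

/-- `SLs(k;σ) = (-1)ⁿ Σ_{j ≤ k-2ₙ} binom(k-2ₙ, j) (-σ)^{|k-2ₙ-j|} Ls_{j+2ₙ}^{j}(σ)`. -/
theorem stmt6 (σ : ℝ) (n : ℕ) (k : Fin n → ℕ) (hk : ∀ u, 2 ≤ k u) :
    SLs k σ = (-1 : ℝ) ^ n *
      ∑ j : (u : Fin n) → Fin (k u - 1),
        (∏ u, (Nat.choose (k u - 2) (j u) : ℝ)) *
          (-σ) ^ (∑ u, (k u - 2 - (j u : ℕ))) *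
          Ls (fun u => (j u : ℕ) + 2) (fun u => (j u : ℕ)) 0 σ := by
  rw [SLs, SLsNest_ofFn_eq_sum σ k hk, Finset.mul_sum]
  refine Finset.sum_congr rfl fun j _ => ?_
  rw [Ls, Finset.prod_mul_distrib, Finset.prod_pow_eq_pow_sum, mul_left_comm _ ((-1 : ℝ) ^ n),
    ← mul_assoc ((-1 : ℝ) ^ n), ← mul_pow, neg_one_mul, neg_neg, one_pow, one_mul]
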